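/- For a network of opponent-coordinating agents under imitation dynamics, if state z is obtained from equilibrium state y by switching some set of agents from B to A, and agent i had the unique highest-earning closed neighbor playing A at y, then agent i's highest-earning closed neighbors at z all play A; consequently an agent that would imitate A at y would still imitate A at z. -/
import Mathlib


open Finset

/-- Total payoff of agent `i` at state `x` (`true` = A, `false` = B). -/
noncomputable def pay {n : ℕ} (G : SimpleGraph (Fin n)) [DecidableRel G.Adj]
    (a b c d : Fin n → ℝ) (x : Fin n → Bool) (i : Fin n) : ℝ :=
  ∑ j ∈ G.neighborFinset i,
    (if x i then (if x j then a i else b i) else (if x j then c i else d i))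

/-- Closed neighborhood of `i`. -/
def cn {n : ℕ} (G : SimpleGraph (Fin n)) [DecidableRel G.Adj] (i : Fin n) : Finset (Fin n) :=
  insert i (G.neighborFinset i)

/-- The set of strategies earning maximal payoff `u` in the closed neighborhood of `i`. -/
def SMset {n : ℕ} (G : SimpleGraph (Fin n)) [DecidableRel G.Adj]
    (u : Fin n → ℝ) (x : Fin n → Bool) (i : Fin n) : Set Bool :=
  {s | ∃ j ∈ cn G i, x j = s ∧ ∀ r ∈ cn G i, u r ≤ u j}

open Classical in
/-- Imitation update: adopt the strategy of the highest earner in the closed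
neighborhood; keep the current strategy on ties. -/
noncomputable def imNext {n : ℕ} (G : SimpleGraph (Fin n)) [DecidableRel G.Adj]
    (u : Fin n → ℝ) (x : Fin n → Bool) (i : Fin n) : Bool :=
  if SMset G u x i = {true} then true
  else if SMset G u x i = {false} then false
  else x i

/-- Opponent-coordinating payoff matrices: `a i > b i` and `d i > c i`. -/
def OppCoord {n : ℕ} (a b c d : Fin n → ℝ) : Prop := ∀ i, b i < a i ∧ c i < d i

/-- Payoffs when a uniform reward `r` is given for each game played with strategy A. -/
noncomputable def payR {n : ℕ} (G : SimpleGraph (Fin n)) [DecidableRel G.Adj]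
    (a b c d : Fin n → ℝ) (r : ℝ) (x : Fin n → Bool) (i : Fin n) : ℝ :=
  pay G a b c d x i + (if x i then r * (G.degree i : ℝ) else 0)

/-- Asynchronous imitation trajectory under uniform reward `r`. -/
def ImTraj {n : ℕ} (G : SimpleGraph (Fin n)) [DecidableRel G.Adj]
    (a b c d : Fin n → ℝ) (r : ℝ) (σ : ℕ → Fin n) (x : ℕ → Fin n → Bool) : Prop :=
  ∀ k j, x (k + 1) j = if j = σ k then imNext G (payR G a b c d r (x k)) (x k) j else x k j

def ImEquilib {n : ℕ} (G : SimpleGraph (Fin n)) [DecidableRel G.Adj]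
    (a b c d : Fin n → ℝ) (x : Fin n → Bool) : Prop :=
  ∀ i, imNext G (pay G a b c d x) x i = x i

/-- Number of neighbors of `i` playing A at state `x0`. -/
def nA {n : ℕ} (G : SimpleGraph (Fin n)) [DecidableRel G.Adj]
    (x0 : Fin n → Bool) (i : Fin n) : ℕ :=
  ((G.neighborFinset i).filter (fun j => x0 j = true)).card

/-- Possible payoffs of agent `i` while playing A, given no A→B switches. -/
def PiA {n : ℕ} (G : SimpleGraph (Fin n)) [DecidableRel G.Adj]
    (a b : Fin n → ℝ) (x0 : Fin n → Bool) (i : Fin n) : Set ℝ :=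
  {v | ∃ δ : ℕ, δ ≤ G.degree i - nA G x0 i ∧
    v = a i * ((nA G x0 i + δ : ℕ) : ℝ) + b i * ((G.degree i - nA G x0 i - δ : ℕ) : ℝ)}

/-- Possible payoffs of agent `i` while playing B, given no A→B switches. -/
def PiB {n : ℕ} (G : SimpleGraph (Fin n)) [DecidableRel G.Adj]
    (c d : Fin n → ℝ) (x0 : Fin n → Bool) (i : Fin n) : Set ℝ :=
  {v | ∃ δ : ℕ, δ ≤ G.degree i - nA G x0 i ∧
    v = c i * ((nA G x0 i + δ : ℕ) : ℝ) + d i * ((G.degree i - nA G x0 i - δ : ℕ) : ℝ)}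


lemma pay_mono_A' {n : ℕ} (G : SimpleGraph (Fin n)) [DecidableRel G.Adj]
    (a b c d : Fin n → ℝ) (hopp : OppCoord a b c d) (y z : Fin n → Bool)
    (hyz : ∀ i, y i = true → z i = true) (j : Fin n) (hj : y j = true) :
    pay G a b c d y j ≤ pay G a b c d z j := by
  unfold pay
  rw [hj, hyz j hj]
  apply Finset.sum_le_sum
  intro k _
  by_cases hk : y k = true
  · rw [hk, hyz k hk]
  · simp only [Bool.not_eq_true] at hk
    rw [hk]
    by_cases hk2 : z k = true
    · simp [hk2, (hopp j).1.le]
    · simp only [Bool.not_eq_true] at hk2; rw [hk2]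

lemma pay_anti_B' {n : ℕ} (G : SimpleGraph (Fin n)) [DecidableRel G.Adj]
    (a b c d : Fin n → ℝ) (hopp : OppCoord a b c d) (y z : Fin n → Bool)
    (hyz : ∀ i, y i = true → z i = true) (j : Fin n) (hjy : y j = false) (hjz : z j = false) :
    pay G a b c d z j ≤ pay G a b c d y j := by
  unfold pay
  rw [hjy, hjz]
  apply Finset.sum_le_sum
  intro k _
  by_cases hk : y k = true
  · rw [hk, hyz k hk]
  · simp only [Bool.not_eq_true] at hk
    rw [hk]
    by_cases hk2 : z k = true
    · simp [hk2, (hopp j).2.le]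
    · simp only [Bool.not_eq_true] at hk2; rw [hk2]

/-- If `z` is obtained from equilibrium `y` by switching some agents from B
to A, and agent `i`'s unique highest-earning closed neighbor at `y` plays A, then all of
`i`'s highest-earning closed neighbors at `z` play A; consequently an agent that would
imitate A at `y` still imitates A at `z`. -/
theorem stmt17 {n : ℕ} (G : SimpleGraph (Fin n)) [DecidableRel G.Adj]
    (a b c d : Fin n → ℝ) (hopp : OppCoord a b c d)
    (y z : Fin n → Bool) (heq : ImEquilib G a b c d y)
    (hyz : ∀ i, y i = true → z i = true)
    (i j0 : Fin n) (hj0 : j0 ∈ cn G i) (hj0A : y j0 = true)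
    (huniq : ∀ r ∈ cn G i, r ≠ j0 → pay G a b c d y r < pay G a b c d y j0) :
    (∀ j ∈ cn G i, (∀ r ∈ cn G i, pay G a b c d z r ≤ pay G a b c d z j) → z j = true) ∧
    SMset G (pay G a b c d z) z i = {true} := by
  have hz0 : z j0 = true := hyz j0 hj0A
  -- any B-player at z in cn G i has strictly smaller payoff than j0
  have key : ∀ r ∈ cn G i, z r = false → pay G a b c d z r < pay G a b c d z j0 := by
    intro r hr hrz
    have hry : y r = false := by
      by_contra h
      simp only [Bool.not_eq_false] at h
      rw [hyz r h] at hrz; exact absurd hrz (by simp)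
    have hrj0 : r ≠ j0 := by rintro rfl; rw [hz0] at hrz; exact absurd hrz (by simp)
    calc pay G a b c d z r ≤ pay G a b c d y r :=
          pay_anti_B' G a b c d hopp y z hyz r hry hrz
      _ < pay G a b c d y j0 := huniq r hr hrj0
      _ ≤ pay G a b c d z j0 := pay_mono_A' G a b c d hopp y z hyz j0 hj0A
  have part1 : ∀ j ∈ cn G i, (∀ r ∈ cn G i, pay G a b c d z r ≤ pay G a b c d z j) → z j = true := by
    intro j hj hmax
    by_contra h
    simp only [Bool.not_eq_true] at h
    exact absurd (hmax j0 hj0) (not_le.2 (key j hj h))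
  refine ⟨part1, ?_⟩
  obtain ⟨m, hm, hmax⟩ := Finset.exists_max_image (cn G i) (pay G a b c d z)
    ⟨i, Finset.mem_insert_self _ _⟩
  rw [Set.eq_singleton_iff_unique_mem]
  constructor
  · exact ⟨m, hm, part1 m hm hmax, hmax⟩
  · rintro s ⟨j, hj, rfl, hjmax⟩
    exact part1 j hj hjmax
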